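/- arXiv:2202.09780 — 4 statements merged into one kernel-verified Lean document; each statement's English description precedes it below -/
import Mathlib

section
/- Let n ≥ 1, let f : ℝ × ℝ → ℝ, and let s₁, s₂ : Fin n → ℝ give nodes (s₁(k), s₂(k)). Define the n × n matrix Q by Q(k, ℓ) = f(s₁(k), s₂(ℓ)), and assume Q is invertible. Define g(x₁, x₂) = Σ_{i,j} f(x₁, s₂(i)) · (Q⁻¹)(i, j) · f(s₁(j), x₂). Then g interpolates f on all coordinate lines through the nodes: for every ℓ and every x₁ ∈ ℝ, g(x₁, s₂(ℓ)) = f(x₁, s₂(ℓ)), and for every k and every x₂ ∈ ℝ, g(s₁(k), x₂) = f(s₁(k), x₂). -/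
open Matrix BigOperators

/-- Multi-node cross approximation in two dimensions interpolates `f` on all
coordinate lines through the nodes `(s₁ k, s₂ k)`. -/
theorem multi_node_cross_interpolation
    (n : ℕ) (hn : 1 ≤ n) (f : ℝ × ℝ → ℝ) (s₁ s₂ : Fin n → ℝ)
    (Q : Matrix (Fin n) (Fin n) ℝ)
    (hQdef : ∀ k ℓ, Q k ℓ = f (s₁ k, s₂ ℓ))
    (hQ : IsUnit Q)
    (g : ℝ → ℝ → ℝ)
    (hg : ∀ x₁ x₂, g x₁ x₂ = ∑ i, ∑ j, f (x₁, s₂ i) * Q⁻¹ i j * f (s₁ j, x₂)) :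
    (∀ (ℓ : Fin n) (x₁ : ℝ), g x₁ (s₂ ℓ) = f (x₁, s₂ ℓ)) ∧
    (∀ (k : Fin n) (x₂ : ℝ), g (s₁ k) x₂ = f (s₁ k, x₂)) := by
  have hinv : Q⁻¹ * Q = 1 := nonsing_inv_mul Q (isUnit_iff_isUnit_det Q |>.mp hQ)
  have hinv' : Q * Q⁻¹ = 1 := mul_nonsing_inv Q (isUnit_iff_isUnit_det Q |>.mp hQ)
  constructor
  · intro ℓ x₁
    rw [hg]
    calc ∑ i, ∑ j, f (x₁, s₂ i) * Q⁻¹ i j * f (s₁ j, s₂ ℓ)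
        = ∑ i, f (x₁, s₂ i) * (Q⁻¹ * Q) i ℓ := by
          apply Finset.sum_congr rfl; intro i _
          rw [Matrix.mul_apply, Finset.mul_sum]
          apply Finset.sum_congr rfl; intro j _
          rw [← hQdef]; ring
      _ = f (x₁, s₂ ℓ) := by
          rw [hinv]
          simp [Matrix.one_apply, Finset.sum_ite_eq' Finset.univ ℓ]
  · intro k x₂
    rw [hg, Finset.sum_comm]
    calc ∑ j, ∑ i, f (s₁ k, s₂ i) * Q⁻¹ i j * f (s₁ j, x₂)
        = ∑ j, (Q * Q⁻¹) k j * f (s₁ j, x₂) := by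
          apply Finset.sum_congr rfl; intro j _
          rw [Matrix.mul_apply, Finset.sum_mul]
          apply Finset.sum_congr rfl; intro i _
          rw [← hQdef]
      _ = f (s₁ k, x₂) := by
          rw [hinv']
          simp [Matrix.one_apply]
end

section
/- Let n ≥ 1, f : ℝ³ → ℝ, and nodes s : Fin n → ℝ³ with components s(k) = (s(k,1), s(k,2), s(k,3)). Define: the row vector F₁(x₁) with entries F₁(x₁)(ℓ) = f(x₁, s(ℓ,2), s(ℓ,3)); the n × n matrix F₂(x₂) with entries F₂(x₂)(k,ℓ) = f(s(k,1), x₂, s(ℓ,3)); the column vector F₃(x₃) with entries F₃(x₃)(k) = f(s(k,1), s(k,2), x₃); and the n × n matrices Q₁₂(k,ℓ) = f(s(k,1), s(ℓ,2), s(ℓ,3)) and Q₂₃(k,ℓ) = f(s(k,1), s(k,2), s(ℓ,3)). Assume Q₁₂ and Q₂₃ are invertible, and define the tensor train cross approximation f̃(x₁,x₂,x₃) = F₁(x₁) · Q₁₂⁻¹ · F₂(x₂) · Q₂₃⁻¹ · F₃(x₃). Then for every node index k, f̃ interpolates f along all three coordinate lines through the node s(k): for all t ∈ ℝ, f̃(t,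 s(k,2), s(k,3)) = f(t, s(k,2), s(k,3)), f̃(s(k,1), t, s(k,3)) = f(s(k,1), t, s(k,3)), and f̃(s(k,1), s(k,2), t) = f(s(k,1), s(k,2), t). -/
open Matrix BigOperators

/-- The three-dimensional tensor train cross approximation interpolates `f`
along all three coordinate lines through every node `(s₁ k, s₂ k, s₃ k)`. -/
theorem ttx_three_dim_interpolation
    (n : ℕ) (hn : 1 ≤ n) (f : ℝ → ℝ → ℝ → ℝ) (s₁ s₂ s₃ : Fin n → ℝ)
    (F₁ : ℝ → Fin n → ℝ) (hF₁ : ∀ x ℓ, F₁ x ℓ = f x (s₂ ℓ) (s₃ ℓ))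
    (F₂ : ℝ → Matrix (Fin n) (Fin n) ℝ) (hF₂ : ∀ x k ℓ, F₂ x k ℓ = f (s₁ k) x (s₃ ℓ))
    (F₃ : ℝ → Fin n → ℝ) (hF₃ : ∀ x k, F₃ x k = f (s₁ k) (s₂ k) x)
    (Q₁₂ : Matrix (Fin n) (Fin n) ℝ) (hQ₁₂ : ∀ k ℓ, Q₁₂ k ℓ = f (s₁ k) (s₂ ℓ) (s₃ ℓ))
    (Q₂₃ : Matrix (Fin n) (Fin n) ℝ) (hQ₂₃ : ∀ k ℓ, Q₂₃ k ℓ = f (s₁ k) (s₂ k) (s₃ ℓ))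
    (hQ₁₂u : IsUnit Q₁₂) (hQ₂₃u : IsUnit Q₂₃)
    (ftilde : ℝ → ℝ → ℝ → ℝ)
    (hft : ∀ x₁ x₂ x₃, ftilde x₁ x₂ x₃ =
      F₁ x₁ ⬝ᵥ ((Q₁₂⁻¹ * F₂ x₂ * Q₂₃⁻¹) *ᵥ F₃ x₃))
    (k : Fin n) :
    (∀ t : ℝ, ftilde t (s₂ k) (s₃ k) = f t (s₂ k) (s₃ k)) ∧
    (∀ t : ℝ, ftilde (s₁ k) t (s₃ k) = f (s₁ k) t (s₃ k)) ∧
    (∀ t : ℝ, ftilde (s₁ k) (s₂ k) t = f (s₁ k) (s₂ k) t) := by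
  have hd12 : IsUnit Q₁₂.det := (Matrix.isUnit_iff_isUnit_det _).mp hQ₁₂u
  have hd23 : IsUnit Q₂₃.det := (Matrix.isUnit_iff_isUnit_det _).mp hQ₂₃u
  have h12 : Q₁₂⁻¹ * Q₁₂ = 1 := Matrix.nonsing_inv_mul _ hd12
  have h23i : Q₂₃ * Q₂₃⁻¹ = 1 := Matrix.mul_nonsing_inv _ hd23
  have h23 : Q₂₃⁻¹ * Q₂₃ = 1 := Matrix.nonsing_inv_mul _ hd23
  have e3 : F₃ (s₃ k) = Q₂₃ *ᵥ Pi.single k 1 := by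
    funext j
    simp [hF₃, hQ₂₃, Matrix.mulVec_single]
  have e1 : F₁ (s₁ k) = Pi.single k 1 ᵥ* Q₁₂ := by
    funext j
    simp [hF₁, hQ₁₂, Matrix.single_vecMul]
  have e2 : F₂ (s₂ k) *ᵥ Pi.single k 1 = Q₁₂ *ᵥ Pi.single k 1 := by
    funext j
    simp [hF₂, hQ₁₂, Matrix.mulVec_single]
  have e2' : (Pi.single k 1 ᵥ* F₂ (s₂ k)) = Pi.single k 1 ᵥ* Q₂₃ := by
    funext j
    simp [hF₂, hQ₂₃, Matrix.single_vecMul]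
  have hsingle : ((Q₁₂⁻¹ * F₂ (s₂ k) * Q₂₃⁻¹) *ᵥ F₃ (s₃ k)) = Pi.single k 1 := by
    rw [e3, Matrix.mulVec_mulVec, Matrix.mul_assoc (Q₁₂⁻¹ * F₂ (s₂ k)), h23, Matrix.mul_one,
      ← Matrix.mulVec_mulVec, e2, Matrix.mulVec_mulVec, h12, Matrix.one_mulVec]
  have key : ∀ u : Matrix (Fin n) (Fin n) ℝ, (Pi.single k 1 ᵥ* Q₁₂) ᵥ* (Q₁₂⁻¹ * u) = Pi.single k 1 ᵥ* u := by
    intro u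
    rw [Matrix.vecMul_vecMul, ← Matrix.mul_assoc, Matrix.mul_nonsing_inv _ hd12, Matrix.one_mul]
  refine ⟨fun t => ?_, fun t => ?_, fun t => ?_⟩
  · rw [hft, hsingle, dotProduct_single, mul_one, hF₁]
  · rw [hft, e1, e3, Matrix.mulVec_mulVec, Matrix.dotProduct_mulVec,
      Matrix.mul_assoc Q₁₂⁻¹, Matrix.mul_assoc Q₁₂⁻¹, key,
      Matrix.mul_assoc, h23, Matrix.mul_one]
    simp [Matrix.single_vecMul, single_dotProduct, hF₂]
  · rw [hft, e1, Matrix.dotProduct_mulVec, Matrix.mul_assoc Q₁₂⁻¹, key,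
      ← Matrix.vecMul_vecMul, e2', Matrix.vecMul_vecMul, h23i, Matrix.vecMul_one,
      single_dotProduct, one_mul, hF₃]
end

section
/- Let d ≥ 2, n ≥ 1, f : (Fin d → ℝ) → ℝ, and nodes s : Fin n → Fin d → ℝ. For 1 ≤ a ≤ d define the matrix-valued functions F_a by (F_a(x))(k,ℓ) = f(s(k,1), …, s(k,a−1), x, s(ℓ,a+1), …, s(ℓ,d)) (so F₁ has a single row, indexed by ℓ, and F_d has a single column, indexed by k), and for 1 ≤ a ≤ d−1 define the n × n matrices (Q_{a,a+1})(k,ℓ) = f(s(k,1), …, s(k,a), s(ℓ,a+1), …, s(ℓ,d)). Assume each Q_{a,a+1} is invertible and define the tensor train cross approximation f̃(x₁,…,x_d) = F₁(x₁) · Q_{1,2}⁻¹ · F₂(x₂) · Q_{2,3}⁻¹ ⋯ Q_{d−1,d}⁻¹ · F_d(x_d). Then f̃ interpolates f on every coordinate line through every node: for every node index k, every coordinate a ∈ {1,…,d}, and every t ∈ ℝ, letting y be the point with y_a = t and y_j = s(k,j) for all j ≠ a, one has f̃(y) = f(y). -/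
open Matrix BigOperators

/-- The `d`-dimensional tensor train cross approximation
`f̃ = F₁ Q₁₂⁻¹ F₂ Q₂₃⁻¹ ⋯ Q_{d-1,d}⁻¹ F_d` interpolates `f` on every
coordinate line through every node.  Coordinates are indexed by `Fin d`
(zero-based): `F a x` fixes the coordinates before `a` at node `k`
(its row index), the coordinate `a` at `x`, and the coordinates after `a`
at node `ℓ` (its column index); `Q a` (for `a : Fin (d-1)`) fixes the
coordinates `≤ a` at node `k` and the rest at node `ℓ`.  Since `F 0`
does not depend on its row index and `F (d-1)` does not depend on its
column index, the full matrix product has all entries equal, and the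
scalar `f̃ y` is its `(0,0)` entry. -/
theorem ttx_interpolation
    (d n : ℕ) (hd : 2 ≤ d) (hn : 1 ≤ n)
    (f : (Fin d → ℝ) → ℝ) (s : Fin n → Fin d → ℝ)
    (F : Fin d → ℝ → Matrix (Fin n) (Fin n) ℝ)
    (hF : ∀ (a : Fin d) (x : ℝ) (k ℓ : Fin n), F a x k ℓ =
      f (fun j => if (j : ℕ) < (a : ℕ) then s k j
                  else if j = a then x else s ℓ j))
    (Q : Fin (d - 1) → Matrix (Fin n) (Fin n) ℝ)
    (hQ : ∀ (a : Fin (d - 1)) (k ℓ : Fin n), Q a k ℓ =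
      f (fun j => if (j : ℕ) ≤ (a : ℕ) then s k j else s ℓ j))
    (hQu : ∀ a, IsUnit (Q a))
    (ftilde : (Fin d → ℝ) → ℝ)
    (hft : ∀ y : Fin d → ℝ, ftilde y =
      (List.ofFn (fun a : Fin d =>
        if h : (a : ℕ) < d - 1 then F a (y a) * (Q ⟨a, h⟩)⁻¹
        else F a (y a))).prod ⟨0, hn⟩ ⟨0, hn⟩)
    (k : Fin n) (a : Fin d) (t : ℝ) :
    ftilde (fun j => if j = a then t else s k j) =
      f (fun j => if j = a then t else s k j) := by
  set y : Fin d → ℝ := fun j => if j = a then t else s k j with hy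
  have hyne : ∀ j : Fin d, j ≠ a → y j = s k j := fun j hj => if_neg hj
  -- the two "selector" matrices
  set Krow : Matrix (Fin n) (Fin n) ℝ :=
    Matrix.of (fun (_ c : Fin n) => if c = k then (1:ℝ) else 0) with hKrow
  set Kcol : Matrix (Fin n) (Fin n) ℝ :=
    Matrix.of (fun (r _ : Fin n) => if r = k then (1:ℝ) else 0) with hKcol
  have hKrowM : ∀ (M : Matrix (Fin n) (Fin n) ℝ) (r c : Fin n),
      (Krow * M) r c = M k c := by
    intro M r c
    simp [Matrix.mul_apply, hKrow, ite_mul, Finset.sum_ite_eq]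
  have hMKcol : ∀ (M : Matrix (Fin n) (Fin n) ℝ) (r c : Fin n),
      (M * Kcol) r c = M r k := by
    intro M r c
    simp [Matrix.mul_apply, hKcol, mul_ite, Finset.sum_ite_eq']
  have hQdet : ∀ b : Fin (d-1), IsUnit (Q b).det :=
    fun b => (Matrix.isUnit_iff_isUnit_det (Q b)).mp (hQu b)
  have hQQ : ∀ b : Fin (d-1), Q b * (Q b)⁻¹ = 1 := fun b => Matrix.mul_nonsing_inv _ (hQdet b)
  have hQQ' : ∀ b : Fin (d-1), (Q b)⁻¹ * Q b = 1 := fun b => Matrix.nonsing_inv_mul _ (hQdet b)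
  -- key row identity: for b < a, the k-th row of F b (s k b) is the k-th row of Q b
  have hrow : ∀ (b : Fin d) (hb : (b:ℕ) < (a:ℕ)) (hb' : (b:ℕ) < d-1) (ℓ : Fin n),
      F b (s k b) k ℓ = Q ⟨(b:ℕ), hb'⟩ k ℓ := by
    intro b hb hb' ℓ
    rw [hF, hQ]
    congr 1
    funext j
    simp only []
    rcases lt_trichotomy (j:ℕ) (b:ℕ) with h | h | h
    · simp [h, Nat.le_of_lt h]
    · have hjb : j = b := Fin.ext h
      subst hjb
      simp [h.le]
    · have h1 : ¬ (j:ℕ) < (b:ℕ) := by omega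
      have h2 : ¬ (j:ℕ) ≤ (b:ℕ) := by omega
      have h3 : j ≠ b := by
        intro hh; subst hh; omega
      simp [h1, h2, h3]
  -- key column identity: for a < b, the k-th column of F b (s k b) is the k-th column of Q (b-1)
  have hcol : ∀ (b : Fin d) (hb : (a:ℕ) < (b:ℕ)) (hb1 : (b:ℕ) - 1 < d - 1) (r : Fin n),
      F b (s k b) r k = Q ⟨(b:ℕ)-1, hb1⟩ r k := by
    intro b hb hb1 r
    rw [hF, hQ]
    congr 1
    funext j
    simp only []
    have hb0 : 1 ≤ (b:ℕ) := by omega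
    rcases lt_trichotomy (j:ℕ) (b:ℕ) with h | h | h
    · have h2 : (j:ℕ) ≤ (b:ℕ) - 1 := by omega
      simp [h, h2]
    · have hjb : j = b := Fin.ext h
      subst hjb
      have h2 : ¬ (j:ℕ) ≤ (j:ℕ) - 1 := by omega
      simp [h2]
    · have h1 : ¬ (j:ℕ) < (b:ℕ) := by omega
      have h2 : ¬ (j:ℕ) ≤ (b:ℕ) - 1 := by omega
      have h3 : j ≠ b := by intro hh; subst hh; omega
      simp [h1, h2, h3]
  -- the list of factors
  set g : Fin d → Matrix (Fin n) (Fin n) ℝ := fun b =>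
    if h : (b : ℕ) < d - 1 then F b (y b) * (Q ⟨b, h⟩)⁻¹ else F b (y b) with hg
  set L : List (Matrix (Fin n) (Fin n) ℝ) := List.ofFn g with hL
  have hlen : L.length = d := by simp [hL]
  have hget : ∀ (m : ℕ) (hm : m < L.length), L[m] = g ⟨m, by rwa [hlen] at hm⟩ := by
    intro m hm
    simp [hL]
  have had : (a:ℕ) < d := a.isLt
  -- left lemma
  have hleft : ∀ m : ℕ, 1 ≤ m → m ≤ (a:ℕ) → (L.take m).prod = Krow := by
    intro m
    induction m with
    | zero => omega
    | succ m ih =>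
      intro _ hma
      have hmd : m < d := by omega
      have hmd1 : m < d - 1 := by omega
      have hml : m < L.length := by omega
      have hstep := List.prod_take_succ L m hml
      rw [hget m hml] at hstep
      have hna : (⟨m, hmd⟩ : Fin d) ≠ a := by
        intro hh
        have : m = (a:ℕ) := by rw [← hh]
        omega
      have hgm : g ⟨m, hmd⟩ = F ⟨m, hmd⟩ (s k ⟨m, hmd⟩) * (Q ⟨m, hmd1⟩)⁻¹ := by
        rw [hg]
        simp only [dif_pos hmd1]
        rw [hyne _ hna]
      rcases Nat.eq_zero_or_pos m with h0 | h1
      · subst h0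
        rw [hstep, hgm]
        simp only [List.take_zero, List.prod_nil, one_mul]
        have hF0 : F ⟨0, hmd⟩ (s k ⟨0, hmd⟩) = Krow * Q ⟨0, hmd1⟩ := by
          ext r c
          rw [hKrowM, hF, hQ]
          congr 1
          funext j
          simp only []
          by_cases hj : (j:ℕ) = 0
          · have hj0 : j = ⟨0, hmd⟩ := Fin.ext hj
            subst hj0
            simp
          · have h1 : ¬ (j:ℕ) < 0 := by omega
            have h2 : ¬ (j:ℕ) ≤ 0 := by omega
            have h3 : j ≠ ⟨0, hmd⟩ := by intro hh; subst hh; simp at hj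
            simp [h1, h2, h3]
        rw [hF0, mul_assoc, hQQ, mul_one]
      · rw [hstep, ih h1 (by omega), hgm]
        have hKF : Krow * F ⟨m, hmd⟩ (s k ⟨m, hmd⟩) = Krow * Q ⟨m, hmd1⟩ := by
          ext r c
          rw [hKrowM, hKrowM]
          exact hrow ⟨m, hmd⟩ (by simpa using (by omega : m < (a:ℕ))) hmd1 c
        rw [← mul_assoc, hKF, mul_assoc, hQQ, mul_one]
  -- right lemma
  have hright : ∀ i m : ℕ, m + i = d - 1 → (a:ℕ) + 1 ≤ m → ∀ (hm1 : m - 1 < d - 1),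
      (L.drop m).prod = Q ⟨m-1, hm1⟩ * Kcol := by
    intro i
    induction i with
    | zero =>
      intro m hmi hma hm1
      have hmd : m < d := by omega
      have hml : m < L.length := by omega
      have hdrop : L.drop m = L[m] :: L.drop (m+1) := List.drop_eq_getElem_cons hml
      have hdrop2 : L.drop (m+1) = [] := by
        apply List.drop_eq_nil_of_le
        omega
      rw [hdrop, hdrop2, hget m hml]
      have hgm : g ⟨m, hmd⟩ = F ⟨m, hmd⟩ (s k ⟨m, hmd⟩) := by
        rw [hg]
        have : ¬ (m < d - 1) := by omega
        simp only [dif_neg this]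
        have hna : (⟨m, hmd⟩ : Fin d) ≠ a := by
          intro hh
          have : m = (a:ℕ) := by rw [← hh]
          omega
        rw [hyne _ hna]
      simp only [List.prod_cons, List.prod_nil, mul_one, hgm]
      ext r c
      rw [hMKcol]
      have hcc : F ⟨m, hmd⟩ (s k ⟨m, hmd⟩) r c = F ⟨m, hmd⟩ (s k ⟨m, hmd⟩) r k := by
        rw [hF, hF]
        congr 1
        funext j
        simp only []
        by_cases h1 : (j:ℕ) < m
        · simp [h1]
        · have h2 : j = ⟨m, hmd⟩ := by
            apply Fin.ext
            have := j.isLt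
            simp only []
            omega
          subst h2
          simp
      rw [hcc]
      exact hcol ⟨m, hmd⟩ (by simpa using (by omega : (a:ℕ) < m)) hm1 r
    | succ i ih =>
      intro m hmi hma hm1
      have hmd : m < d := by omega
      have hmd1 : m < d - 1 := by omega
      have hml : m < L.length := by omega
      have hdrop : L.drop m = L[m] :: L.drop (m+1) := List.drop_eq_getElem_cons hml
      have hm1' : (m+1) - 1 < d - 1 := by omega
      have hih := ih (m+1) (by omega) (by omega) hm1'
      have hna : (⟨m, hmd⟩ : Fin d) ≠ a := by
        intro hh
        have : m = (a:ℕ) := by rw [← hh]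
        omega
      have hgm : g ⟨m, hmd⟩ = F ⟨m, hmd⟩ (s k ⟨m, hmd⟩) * (Q ⟨m, hmd1⟩)⁻¹ := by
        rw [hg]
        simp only [dif_pos hmd1]
        rw [hyne _ hna]
      have hQm : (⟨(m+1)-1, hm1'⟩ : Fin (d-1)) = ⟨m, hmd1⟩ := rfl
      rw [hdrop]
      simp only [List.prod_cons]
      rw [hget m hml, hih, hQm, hgm, mul_assoc, ← mul_assoc (Q ⟨m, hmd1⟩)⁻¹, hQQ', one_mul]
      ext r c
      rw [hMKcol, hMKcol]
      have hb0 : 1 ≤ m := by omega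
      exact hcol ⟨m, hmd⟩ (by simpa using (by omega : (a:ℕ) < m)) hm1 r
  -- final entry identity
  have hFa : ∀ r c : Fin n, ((a:ℕ) = 0 ∨ r = k) → ((a:ℕ) = d-1 ∨ c = k) →
      F a t r c = f y := by
    intro r c h1 h2
    rw [hF]
    congr 1
    funext j
    rw [hy]
    simp only []
    by_cases hja : j = a
    · subst hja
      simp
    · rw [if_neg hja]
      have hja' : (j:ℕ) ≠ (a:ℕ) := fun hh => hja (Fin.ext hh)
      by_cases hlt : (j:ℕ) < (a:ℕ)
      · rcases h1 with h1 | h1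
        · omega
        · subst h1
          simp [hlt, hja]
      · rcases h2 with h2 | h2
        · have := j.isLt
          omega
        · subst h2
          simp [hlt, hja]
  -- assemble
  rw [hft]
  show L.prod ⟨0, hn⟩ ⟨0, hn⟩ = f y
  have hsplit : L.prod = (L.take (a:ℕ)).prod * (L.drop (a:ℕ)).prod :=
    (List.prod_take_mul_prod_drop L (a:ℕ)).symm
  have hal : (a:ℕ) < L.length := by omega
  have hdropa : L.drop (a:ℕ) = L[(a:ℕ)] :: L.drop ((a:ℕ)+1) := List.drop_eq_getElem_cons hal
  have hga : (⟨(a:ℕ), had⟩ : Fin d) = a := Fin.ext rfl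
  have hya : y a = t := if_pos rfl
  rcases Nat.lt_or_ge (a:ℕ) (d-1) with had1 | had1
  · -- a < d-1 : the right part is Q a * Kcol
    have hr := hright (d - 1 - ((a:ℕ)+1)) ((a:ℕ)+1) (by omega) (by omega) (by omega)
    have hgaF : L[(a:ℕ)] = F a t * (Q ⟨(a:ℕ), had1⟩)⁻¹ := by
      rw [hget _ hal, hg]
      simp only [dif_pos had1, hga, hya]
    rcases Nat.eq_zero_or_pos (a:ℕ) with ha0 | ha1
    · have htake : (L.take (a:ℕ)).prod = 1 := by rw [ha0]; simp
      rw [hsplit, hdropa, htake, one_mul, hgaF]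
      simp only [List.prod_cons]
      rw [hr]
      have : (⟨(a:ℕ)+1-1, by omega⟩ : Fin (d-1)) = ⟨(a:ℕ), had1⟩ := rfl
      rw [this, mul_assoc, ← mul_assoc (Q ⟨(a:ℕ), had1⟩)⁻¹, hQQ', one_mul, hMKcol]
      exact hFa _ _ (Or.inl ha0) (Or.inr rfl)
    · rw [hsplit, hdropa, hgaF, hleft (a:ℕ) ha1 le_rfl]
      simp only [List.prod_cons]
      rw [hr]
      have : (⟨(a:ℕ)+1-1, by omega⟩ : Fin (d-1)) = ⟨(a:ℕ), had1⟩ := rfl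
      rw [this, mul_assoc, ← mul_assoc (Q ⟨(a:ℕ), had1⟩)⁻¹, hQQ', one_mul]
      rw [show Krow * (F a t * Kcol) = (Krow * F a t) * Kcol from (mul_assoc _ _ _).symm]
      rw [hMKcol, hKrowM]
      exact hFa _ _ (Or.inr rfl) (Or.inr rfl)
  · -- a = d-1
    have ha1 : 1 ≤ (a:ℕ) := by omega
    have haeq : (a:ℕ) = d - 1 := by omega
    have hgaF : L[(a:ℕ)] = F a t := by
      rw [hget _ hal, hg]
      have : ¬ ((a:ℕ) < d - 1) := by omega
      simp only [dif_neg this, hga, hya]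
    have hdropa1 : L.drop ((a:ℕ)+1) = [] := by
      apply List.drop_eq_nil_of_le
      omega
    rw [hsplit, hdropa, hdropa1, hgaF, hleft (a:ℕ) ha1 le_rfl]
    simp only [List.prod_cons, List.prod_nil, mul_one]
    rw [hKrowM]
    exact hFa _ _ (Or.inr rfl) (Or.inl haeq)
end

section
/- Let d ≥ 1 be a natural number, K > 0 a real number, and S ∈ [0, K·d]. Then max(0, S − K) = ((d−1)/d)·S − Σ_{m=1}^{∞} (2·K·d)/(m²·π²) · sin(m·π/d) · sin(m·π·S/(K·d)); that is, the series Σ_{m≥1} (2Kd)/(m²π²) sin(mπ/d) sin(mπS/(Kd)) converges and its sum equals ((d−1)/d)·S − max(0, S − K). -/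
/-!
The Fourier series of the Bernoulli polynomial `B₂` gives
`∑ cos (mθ) / m² = θ²/4 - πθ/2 + π²/6` on `[0, 2π]`. Writing `sin x sin y` as a difference of
cosines, this turns `∑ sin (ma) sin (mb) / m²` for `a, b ∈ [0, π]` into `(π min a b - a b) / 2`,
the Green's function of `-u''` on `[0, π]` with Dirichlet conditions. With `a = π/d` and
`b = πS/(Kd)` this is the payoff, since `min K S = S - max 0 (S - K)`.
-/

open Real

theorem hasSum_cos_mul_div_sq {θ : ℝ} (hθ : θ ∈ Set.Icc 0 (2 * π)) :
    HasSum (fun m : ℕ => cos ((m + 1 : ℝ) * θ) / (m + 1 : ℝ) ^ 2)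
      (θ ^ 2 / 4 - π * θ / 2 + π ^ 2 / 6) := by
  have hx : θ / (2 * π) ∈ Set.Icc (0 : ℝ) 1 := by
    rw [Set.mem_Icc, le_div_iff₀ (by positivity), div_le_iff₀ (by positivity)]
    constructor <;> linarith [hθ.1, hθ.2]
  -- the `n = 0` term is `cos 0 / 0 = 0`, so dropping it does not change the sum
  have h : HasSum (fun n : ℕ => cos (n * θ) / (n : ℝ) ^ 2)
      (θ ^ 2 / 4 - π * θ / 2 + π ^ 2 / 6) := by
    convert hasSum_one_div_nat_pow_mul_cos one_ne_zero hx using 1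
    · ext n
      rw [show 2 * π * n * (θ / (2 * π)) = n * θ by field_simp]
      ring
    · rw [← bernoulliFun, Nat.mul_one, bernoulliFun_two]
      norm_num
      field_simp
      ring
  simpa using (hasSum_nat_add_iff' 1).2 h

theorem hasSum_sin_mul_mul_sin_mul_div_sq {a b : ℝ} (ha : a ∈ Set.Icc 0 π)
    (hb : b ∈ Set.Icc 0 π) :
    HasSum (fun m : ℕ => sin ((m + 1 : ℝ) * a) * sin ((m + 1 : ℝ) * b) / (m + 1 : ℝ) ^ 2)
      ((π * min a b - a * b) / 2) := by
  obtain ⟨ha0, haπ⟩ := ha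
  obtain ⟨hb0, hbπ⟩ := hb
  have hdiff := hasSum_cos_mul_div_sq (θ := |a - b|)
    ⟨abs_nonneg _, by rw [abs_le]; constructor <;> linarith⟩
  have hsum := hasSum_cos_mul_div_sq (θ := a + b) ⟨by linarith, by linarith⟩
  have hvalue : (π * min a b - a * b) / 2 =
      ((|a - b| ^ 2 / 4 - π * |a - b| / 2 + π ^ 2 / 6) -
        ((a + b) ^ 2 / 4 - π * (a + b) / 2 + π ^ 2 / 6)) / 2 := by
    rw [sq_abs]
    rcases le_total a b with h | h
    · rw [min_eq_left h, abs_of_nonpos (by linarith)]; ring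
    · rw [min_eq_right h, abs_of_nonneg (by linarith)]; ring
  rw [hvalue]
  refine ((hdiff.sub hsum).div_const 2).congr_fun fun m => ?_
  have hm : (0 : ℝ) ≤ m + 1 := by positivity
  rw [← abs_of_nonneg hm, ← abs_mul, cos_abs, abs_of_nonneg hm, mul_sub, mul_add, cos_sub,
    cos_add]
  ring

/-- Fourier sine-series expansion of the call payoff `max 0 (S - K)` on the
interval `[0, K*d]`: the series `Σ_{m ≥ 1} (2Kd)/(m²π²) sin(mπ/d) sin(mπS/(Kd))`
converges with sum `((d-1)/d)·S - max 0 (S - K)`.  (The series index `m ≥ 1`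
is realised as `m + 1` with `m : ℕ`.) -/
theorem payoff_fourier_series
    (d : ℕ) (hd : 1 ≤ d) (K : ℝ) (hK : 0 < K) (S : ℝ)
    (hS : S ∈ Set.Icc (0 : ℝ) (K * d)) :
    HasSum
      (fun m : ℕ =>
        (2 * K * d) / ((m + 1 : ℝ) ^ 2 * π ^ 2) *
          Real.sin ((m + 1 : ℝ) * π / d) *
          Real.sin ((m + 1 : ℝ) * π * S / (K * d)))
      (((d : ℝ) - 1) / d * S - max 0 (S - K)) := by
  obtain ⟨hS0, hSKd⟩ := hS
  have hd0 : (0 : ℝ) < d := by exact_mod_cast hd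
  set c := π / (K * d) with hc
  have hc0 : 0 ≤ c := by positivity
  have hcK : c * K = π / d := by rw [hc]; field_simp
  have hcS : c * S ≤ π :=
    calc c * S ≤ c * (K * d) := mul_le_mul_of_nonneg_left hSKd hc0
      _ = π := by rw [hc]; field_simp
  have key := (hasSum_sin_mul_mul_sin_mul_div_sq
    ⟨by positivity, hcK ▸ div_le_self pi_pos.le (by exact_mod_cast hd)⟩
    ⟨by positivity, hcS⟩).mul_left (2 * K * d / π ^ 2)
  have hpayoff : S - max 0 (S - K) = min K S := by
    rcases le_total S K with h | h <;> simp [h, sub_nonpos.2, sub_nonneg.2]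
  have hvalue : ((d : ℝ) - 1) / d * S - max 0 (S - K) =
      2 * K * d / π ^ 2 * ((π * min (c * K) (c * S) - c * K * (c * S)) / 2) := by
    rw [← mul_min_of_nonneg _ _ hc0, hc, ← hpayoff]
    field_simp
    ring
  rw [hvalue]
  refine key.congr_fun fun m => ?_
  rw [hcK, show (m + 1 : ℝ) * π * S / (K * d) = (m + 1) * (c * S) by ring]
  field_simp
end
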